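/- arXiv:2410.21250 — 3 statements merged into one kernel-verified Lean document; each statement's English description precedes it below -/
import Mathlib

section
/- Let η, ζ ∈ ℂ⟦u,v⟧ with η ≠ 0 and with constant coefficient ζ(0,0) ≠ 0. Then the Newton polygons coincide: N(η·ζ) = N(η). (Invariance of the Newton polygon of an effective divisor on (ℂ²,0) under change of defining series, part (1) of the paper's Proposition 7.10.) -/
open scoped Pointwise

/-!
A Newton polygon only sees the upper closure `S + σ∨` of the support. Every term of the Cauchy
product of `η` and `ζ` sits above an exponent of `η`, so `supp(ηζ) ⊆ supp η + σ∨`. Conversely,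
below any exponent of `η` there is a minimal one `e`, and the only term of `ηζ` at `e` is
`η_e ζ(0,0) ≠ 0`; hence `supp η ⊆ supp(ηζ) + σ∨`, and the two upper closures agree.
-/

/-- The nonnegative quadrant `σ∨ = [0,∞)² ⊆ ℝ²`. -/
def quadrant : Set (ℝ × ℝ) := {x | 0 ≤ x.1 ∧ 0 ≤ x.2}

/-- The support of `η`, viewed inside `ℝ²`. -/
noncomputable def suppR (η : MvPowerSeries (Fin 2) ℂ) : Set (ℝ × ℝ) :=
  (fun pq : ℕ × ℕ => ((pq.1 : ℝ), (pq.2 : ℝ))) ''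
    {pq : ℕ × ℕ |
      MvPowerSeries.coeff (Finsupp.single 0 pq.1 + Finsupp.single 1 pq.2) η ≠ 0}

/-- The Newton polygon of `η`: the convex hull of the Minkowski sum of the support of `η`
and the nonnegative quadrant. -/
noncomputable def newtonPolygon (η : MvPowerSeries (Fin 2) ℂ) : Set (ℝ × ℝ) :=
  convexHull ℝ (suppR η + quadrant)

theorem Monotone.upperClosure_image_upperClosure {α β : Type*} [Preorder α] [Preorder β]
    {f : α → β} (hf : Monotone f) (s : Set α) :
    upperClosure (f '' upperClosure s) = upperClosure (f '' s) := by
  refine le_antisymm (upperClosure_anti (Set.image_mono subset_upperClosure)) ?_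
  rw [le_upperClosure]
  rintro _ ⟨x, hx, rfl⟩
  obtain ⟨a, ha, hax⟩ := mem_upperClosure.1 hx
  exact mem_upperClosure.2 ⟨f a, Set.mem_image_of_mem f ha, hf hax⟩

namespace MvPowerSeries

variable {σ R : Type*}

theorem exists_le_coeff_ne_zero_of_coeff_mul_ne_zero [Semiring R] {φ ψ : MvPowerSeries σ R}
    {d : σ →₀ ℕ} (h : coeff d (φ * ψ) ≠ 0) : ∃ e ≤ d, coeff e φ ≠ 0 := by
  classical
  rw [coeff_mul] at h
  obtain ⟨⟨e, f⟩, hef, hne⟩ := Finset.exists_ne_zero_of_sum_ne_zero h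
  exact ⟨e, Finset.HasAntidiagonal.mem_antidiagonal.1 hef ▸ le_self_add,
    left_ne_zero_of_mul hne⟩

theorem coeff_mul_eq_coeff_mul_constantCoeff [Semiring R] {φ : MvPowerSeries σ R}
    {e : σ →₀ ℕ} (h : ∀ f < e, coeff f φ = 0) (ψ : MvPowerSeries σ R) :
    coeff e (φ * ψ) = coeff e φ * constantCoeff ψ := by
  classical
  rw [coeff_mul, Finset.sum_eq_single (e, 0), coeff_zero_eq_constantCoeff]
  · rintro ⟨f, g⟩ hfg hne
    obtain rfl := Finset.HasAntidiagonal.mem_antidiagonal.1 hfg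
    have hg : g ≠ 0 := by rintro rfl; simp at hne
    rw [h f (lt_add_of_pos_right f (pos_iff_ne_zero.2 hg)), zero_mul]
  · simp

theorem exists_le_coeff_mul_ne_zero [Semiring R] [NoZeroDivisors R] {φ ψ : MvPowerSeries σ R}
    (hψ : constantCoeff ψ ≠ 0) {d : σ →₀ ℕ} (h : coeff d φ ≠ 0) :
    ∃ e ≤ d, coeff e (φ * ψ) ≠ 0 := by
  obtain ⟨e, hed, he, hmin⟩ := exists_minimal_le_of_wellFoundedLT (coeff · φ ≠ 0) d h
  refine ⟨e, hed, ?_⟩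
  rw [coeff_mul_eq_coeff_mul_constantCoeff (fun f hf ↦ ?_)]
  · exact mul_ne_zero he hψ
  · by_contra hf'
    exact hf.not_ge (hmin hf' hf.le)

theorem upperClosure_support_mul_of_constantCoeff_ne_zero [Semiring R] [NoZeroDivisors R]
    (φ : MvPowerSeries σ R) {ψ : MvPowerSeries σ R} (hψ : constantCoeff ψ ≠ 0) :
    upperClosure {e | coeff e (φ * ψ) ≠ 0} = upperClosure {e | coeff e φ ≠ 0} := by
  refine le_antisymm (le_upperClosure.2 fun d hd ↦ ?_) (le_upperClosure.2 fun d hd ↦ ?_)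
  · obtain ⟨e, hed, he⟩ := exists_le_coeff_mul_ne_zero hψ hd
    exact mem_upperClosure.2 ⟨e, he, hed⟩
  · obtain ⟨e, hed, he⟩ := exists_le_coeff_ne_zero_of_coeff_mul_ne_zero hd
    exact mem_upperClosure.2 ⟨e, he, hed⟩

end MvPowerSeries

theorem add_quadrant (s : Set (ℝ × ℝ)) : s + quadrant = upperClosure s := by
  have hquadrant : quadrant = ↑(upperClosure (0 : Set (ℝ × ℝ))) := by
    ext x; simp [quadrant, Prod.le_def]
  rw [hquadrant, add_upperClosure, add_zero]

theorem suppR_eq_image (η : MvPowerSeries (Fin 2) ℂ) :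
    suppR η =
      (fun e : Fin 2 →₀ ℕ ↦ ((e 0 : ℝ), (e 1 : ℝ))) '' {e | MvPowerSeries.coeff e η ≠ 0} := by
  ext x
  constructor
  · rintro ⟨pq, h, rfl⟩
    exact ⟨_, h, by simp⟩
  · rintro ⟨e, h, rfl⟩
    refine ⟨(e 0, e 1), ?_, rfl⟩
    rwa [Set.mem_ofPred_eq, ← Fin.sum_univ_two (fun i ↦ Finsupp.single i (e i)),
      Finsupp.univ_sum_single]

theorem newtonPolygon_mul_unit_general (η ζ : MvPowerSeries (Fin 2) ℂ)
    (hζ : MvPowerSeries.constantCoeff ζ ≠ 0) :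
    newtonPolygon (η * ζ) = newtonPolygon η := by
  have hmono : Monotone fun e : Fin 2 →₀ ℕ ↦ ((e 0 : ℝ), (e 1 : ℝ)) :=
    fun a b h ↦ Prod.mk_le_mk.2 ⟨Nat.cast_le.2 (h 0), Nat.cast_le.2 (h 1)⟩
  simp only [newtonPolygon, add_quadrant, suppR_eq_image]
  rw [← hmono.upperClosure_image_upperClosure,
    MvPowerSeries.upperClosure_support_mul_of_constantCoeff_ne_zero η hζ,
    hmono.upperClosure_image_upperClosure]

/-- if `η ≠ 0` and `ζ` has nonzero constant coefficient, then
`N(η·ζ) = N(η)`. -/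
theorem newtonPolygon_mul_unit (η ζ : MvPowerSeries (Fin 2) ℂ) (hη : η ≠ 0)
    (hζ : MvPowerSeries.constantCoeff ζ ≠ 0) :
    newtonPolygon (η * ζ) = newtonPolygon η :=
  newtonPolygon_mul_unit_general η ζ hζ
end

section
/- Let R be a commutative ring, let f, g ∈ R be such that the image of g in R/(f) is a nonzerodivisor (i.e., for all x ∈ R, g·x ∈ (f) implies x ∈ (f)), let λ ∈ R be a unit, and let a, b be positive integers. Then, as an equality in ℕ∞, Module.length R (R ⧸ Ideal.span {f, f^b − λ·g^a}) = a · Module.length R (R ⧸ Ideal.span {f, g}). (The algebraic content of the paper's Lemma 6.4 combined with Proposition 2.8: the intersection number Z(f)·Z(f^b − λg^a) equals a·Z(f)·Z(g).) -/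
/-- The length of an `R`-module `M`: the supremum in `ℕ∞` of the lengths of strictly
increasing chains of submodules of `M`. -/
noncomputable def moduleLength (R M : Type*) [Ring R] [AddCommGroup M] [Module R M] : ℕ∞ :=
  ⨆ p : LTSeries (Submodule R M), (p.length : ℕ∞)

section Exact

variable {R A B C : Type*} [Ring R] [AddCommGroup A] [AddCommGroup B] [AddCommGroup C]
  [Module R A] [Module R B] [Module R C]

instance ltseries_nonempty : Nonempty (LTSeries (Submodule R A)) :=
  ⟨RelSeries.singleton _ ⊥⟩

lemma submodule_eq_of_exact (i : A →ₗ[R] B) (π : B →ₗ[R] C)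
    (hexact : LinearMap.range i = LinearMap.ker π) {s t : Submodule R B} (hst : s ≤ t)
    (h1 : s.comap i = t.comap i) (h2 : s.map π = t.map π) : s = t := by
  refine le_antisymm hst fun x hx => ?_
  have hmem : π x ∈ t.map π := ⟨x, hx, rfl⟩
  rw [← h2] at hmem
  obtain ⟨y, hy, hxy⟩ := hmem
  have hker : x - y ∈ LinearMap.ker π := by
    simp [LinearMap.mem_ker, map_sub, hxy]
  rw [← hexact] at hker
  obtain ⟨c, hc⟩ := hker
  have hct : c ∈ t.comap i := by
    simp only [Submodule.mem_comap, hc]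
    exact sub_mem hx (hst hy)
  rw [← h1] at hct
  have : y + i c ∈ s := add_mem hy hct
  rwa [hc, add_sub_cancel] at this

lemma exists_pair_chain (i : A →ₗ[R] B) (π : B →ₗ[R] C)
    (hexact : LinearMap.range i = LinearMap.ker π) :
    ∀ (n : ℕ) (p : LTSeries (Submodule R B)), p.length = n →
      ∃ (qa : LTSeries (Submodule R A)) (qc : LTSeries (Submodule R C)),
        qa.last = (p.last).comap i ∧ qc.last = (p.last).map π ∧
          p.length ≤ qa.length + qc.length := by
  intro n
  induction n with
  | zero =>
    intro p hp
    exact ⟨RelSeries.singleton _ ((p.last).comap i), RelSeries.singleton _ ((p.last).map π),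
      rfl, rfl, by omega⟩
  | succ n ih =>
    intro p hp
    have hlen : p.eraseLast.length = n := by
      simp [RelSeries.eraseLast, hp]
    obtain ⟨qa, qc, hqa, hqc, hle⟩ := ih p.eraseLast hlen
    have hlt : p.eraseLast.last < p.last := p.eraseLast_last_rel_last (by omega)
    by_cases hcom : (p.eraseLast.last).comap i = (p.last).comap i
    · have hmap : (p.eraseLast.last).map π < (p.last).map π := by
        refine lt_of_le_of_ne (Submodule.map_mono hlt.le) fun he => ?_
        exact hlt.ne (submodule_eq_of_exact i π hexact hlt.le hcom he)
      refine ⟨qa, qc.snoc ((p.last).map π) (hqc ▸ hmap), ?_, ?_, ?_⟩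
      · rw [hqa, hcom]
      · simp
      · simp only [RelSeries.snoc, RelSeries.append]
        omega
    · have hcomlt : (p.eraseLast.last).comap i < (p.last).comap i :=
        lt_of_le_of_ne (Submodule.comap_mono hlt.le) hcom
      by_cases hm : (p.eraseLast.last).map π = (p.last).map π
      · refine ⟨qa.snoc ((p.last).comap i) (hqa ▸ hcomlt), qc, ?_, ?_, ?_⟩
        · simp
        · rw [hqc, hm]
        · simp only [RelSeries.snoc, RelSeries.append]
          omega
      · have hmaplt : (p.eraseLast.last).map π < (p.last).map π :=
          lt_of_le_of_ne (Submodule.map_mono hlt.le) hm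
        refine ⟨qa.snoc ((p.last).comap i) (hqa ▸ hcomlt),
          qc.snoc ((p.last).map π) (hqc ▸ hmaplt), by simp, by simp, ?_⟩
        simp only [RelSeries.snoc, RelSeries.append]
        omega

lemma moduleLength_eq_of_exact (i : A →ₗ[R] B) (π : B →ₗ[R] C)
    (hi : Function.Injective i) (hπ : Function.Surjective π)
    (hexact : LinearMap.range i = LinearMap.ker π) :
    moduleLength R B = moduleLength R A + moduleLength R C := by
  refine le_antisymm ?_ ?_
  · refine iSup_le fun p => ?_
    obtain ⟨qa, qc, _, _, hle⟩ := exists_pair_chain i π hexact p.length p rfl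
    calc (p.length : ℕ∞) ≤ ((qa.length + qc.length : ℕ) : ℕ∞) := by exact_mod_cast hle
      _ = (qa.length : ℕ∞) + (qc.length : ℕ∞) := by push_cast; rfl
      _ ≤ moduleLength R A + moduleLength R C :=
          add_le_add (le_iSup (fun p : LTSeries (Submodule R A) => (p.length : ℕ∞)) qa)
            (le_iSup (fun p : LTSeries (Submodule R C) => (p.length : ℕ∞)) qc)
  · rw [moduleLength, moduleLength, ENat.iSup_add]
    refine iSup_le fun p => ?_
    rw [ENat.add_iSup]
    refine iSup_le fun q => ?_
    -- extend p so that its last is ⊤, and q so that its head is ⊥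
    obtain ⟨p', hp'len, hp'last⟩ : ∃ p' : LTSeries (Submodule R A),
        p.length ≤ p'.length ∧ p'.last = ⊤ := by
      by_cases h : p.last = ⊤
      · exact ⟨p, le_refl _, h⟩
      · refine ⟨p.snoc ⊤ (lt_top_iff_ne_top.2 h), ?_, by simp⟩
        simp only [RelSeries.snoc, RelSeries.append]
        omega
    obtain ⟨q', hq'len, hq'head⟩ : ∃ q' : LTSeries (Submodule R C),
        q.length ≤ q'.length ∧ q'.head = ⊥ := by
      by_cases h : q.head = ⊥
      · exact ⟨q, le_refl _, h⟩
      · refine ⟨q.cons ⊥ (bot_lt_iff_ne_bot.2 h), ?_, by simp⟩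
        simp only [RelSeries.cons, RelSeries.append]
        omega
    have hconnect :
        (p'.map (Submodule.map i) (Submodule.map_strictMono_of_injective hi)).last =
        (q'.map (Submodule.comap π) (Submodule.comap_strictMono_of_surjective hπ)).head := by
      simp [hp'last, hq'head, Submodule.map_top, Submodule.comap_bot, hexact]
    have := le_iSup (fun r : LTSeries (Submodule R B) => (r.length : ℕ∞))
      ((p'.map (Submodule.map i) (Submodule.map_strictMono_of_injective hi)).smash
        (q'.map (Submodule.comap π) (Submodule.comap_strictMono_of_surjective hπ)) hconnect)
    refine le_trans ?_ this
    simp only [RelSeries.smash, RelSeries.map]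
    calc (p.length : ℕ∞) + (q.length : ℕ∞) ≤ (p'.length : ℕ∞) + (q'.length : ℕ∞) := by
          exact_mod_cast add_le_add hp'len hq'len
      _ = ((p'.length + q'.length : ℕ) : ℕ∞) := by push_cast; rfl

end Exact

section Pencil

variable {R : Type*} [CommRing R]

lemma pow_nzd {f g : R} (hg : ∀ x : R, g * x ∈ Ideal.span {f} → x ∈ Ideal.span {f}) :
    ∀ (k : ℕ) (x : R), g ^ k * x ∈ Ideal.span {f} → x ∈ Ideal.span {f} := by
  intro k
  induction k with
  | zero => intro x hx; simpa using hx
  | succ n ih =>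
    intro x hx
    have : g ^ n * (g * x) ∈ Ideal.span {f} := by
      rw [show g ^ n * (g * x) = g ^ (n + 1) * x by ring]
      exact hx
    exact hg x (ih _ this)

lemma length_succ_step (f g : R)
    (hg : ∀ x : R, g * x ∈ Ideal.span {f} → x ∈ Ideal.span {f}) (k : ℕ) :
    moduleLength R (R ⧸ Ideal.span {f, g ^ (k + 1)}) =
      moduleLength R (R ⧸ Ideal.span {f, g}) +
        moduleLength R (R ⧸ Ideal.span {f, g ^ k}) := by
  set I1 : Ideal R := Ideal.span {f, g}
  set Ik : Ideal R := Ideal.span {f, g ^ k}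
  set Ik1 : Ideal R := Ideal.span {f, g ^ (k + 1)}
  -- φ : R → R ⧸ Ik1,  x ↦ g^k x
  set φ : R →ₗ[R] R ⧸ Ik1 := Ik1.mkQ.comp (LinearMap.lsmul R R (g ^ k)) with hφ
  have hφ_apply : ∀ x : R, φ x = Ik1.mkQ (g ^ k * x) := fun x => rfl
  have h1 : I1 ≤ LinearMap.ker φ := by
    intro x hx
    obtain ⟨c, d, hcd⟩ := Ideal.mem_span_pair.1 hx
    rw [LinearMap.mem_ker, hφ_apply, Submodule.mkQ_apply, Submodule.Quotient.mk_eq_zero]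
    refine Ideal.mem_span_pair.2 ⟨g ^ k * c, d, ?_⟩
    rw [← hcd]; ring
  set i : (R ⧸ I1) →ₗ[R] R ⧸ Ik1 := I1.liftQ φ h1 with hi_def
  have hker_φ : LinearMap.ker φ ≤ I1 := by
    intro x hx
    rw [LinearMap.mem_ker, hφ_apply, Submodule.mkQ_apply, Submodule.Quotient.mk_eq_zero] at hx
    obtain ⟨c, d, hcd⟩ := Ideal.mem_span_pair.1 hx
    have hxf : x - d * g ∈ Ideal.span {f} := by
      refine pow_nzd hg k (x - d * g) ?_
      rw [show g ^ k * (x - d * g) = g ^ k * x - d * g ^ (k + 1) by ring, ← hcd,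
        show c * f + d * g ^ (k + 1) - d * g ^ (k + 1) = c * f by ring]
      exact Ideal.mem_span_singleton.2 (dvd_mul_left f c)
    have hsub : Ideal.span {f} ≤ I1 := Ideal.span_mono (by simp)
    have : (x - d * g) + d * g ∈ I1 :=
      add_mem (hsub hxf) (Ideal.mul_mem_left _ d (Ideal.subset_span (by simp)))
    simpa using this
  have hi : Function.Injective i :=
    LinearMap.ker_eq_bot.1 (Submodule.ker_liftQ_eq_bot _ _ _ hker_φ)
  have hIk1_le : Ik1 ≤ Ik := by
    refine Ideal.span_le.2 ?_
    rintro x (rfl | rfl)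
    · exact Ideal.subset_span (by simp)
    · rw [pow_succ]
      exact Ideal.mul_mem_right g _ (Ideal.subset_span (by simp))
  have h2 : Ik1 ≤ LinearMap.ker Ik.mkQ := by rwa [Submodule.ker_mkQ]
  set π : (R ⧸ Ik1) →ₗ[R] R ⧸ Ik := Ik1.liftQ Ik.mkQ h2 with hπ_def
  have hπ : Function.Surjective π := by
    rw [← LinearMap.range_eq_top, hπ_def, Submodule.range_liftQ, Submodule.range_mkQ]
  have hexact : LinearMap.range i = LinearMap.ker π := by
    rw [hi_def, Submodule.range_liftQ, hπ_def, Submodule.ker_liftQ, Submodule.ker_mkQ, hφ,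
      LinearMap.range_comp]
    refine le_antisymm ?_ ?_
    · rw [Submodule.map_le_iff_le_comap, Submodule.comap_map_mkQ]
      intro x hx
      obtain ⟨y, hy⟩ := hx
      have : x ∈ Ik := by
        rw [← hy, LinearMap.lsmul_apply, smul_eq_mul]
        exact Ideal.mul_mem_right _ _ (Ideal.subset_span (by simp))
      exact Submodule.mem_sup_right this
    · rw [Submodule.map_le_iff_le_comap, Submodule.comap_map_mkQ]
      refine Ideal.span_le.2 ?_
      rintro x (rfl | rfl)
      · exact Submodule.mem_sup_left (Ideal.subset_span (by simp))
      · exact Submodule.mem_sup_right ⟨1, by simp⟩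
  exact moduleLength_eq_of_exact i π hi hπ hexact

lemma length_pow (f g : R)
    (hg : ∀ x : R, g * x ∈ Ideal.span {f} → x ∈ Ideal.span {f}) :
    ∀ a : ℕ, 1 ≤ a →
      moduleLength R (R ⧸ Ideal.span {f, g ^ a}) =
        (a : ℕ∞) * moduleLength R (R ⧸ Ideal.span {f, g}) := by
  intro a
  induction a with
  | zero => omega
  | succ n ih =>
    intro _
    by_cases hn : 1 ≤ n
    · rw [length_succ_step f g hg n, ih hn]
      push_cast
      rw [add_one_mul, add_comm]
    · have hn0 : n = 0 := by omega
      subst hn0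
      rw [pow_one]
      norm_num
end Pencil

/-- if the image of `g` in `R/(f)` is a nonzerodivisor, `λ` is a unit and
`a, b` are positive integers, then
`length (R ⧸ (f, f^b − λ·g^a)) = a · length (R ⧸ (f, g))` in `ℕ∞`. -/
theorem length_quotient_pencil (R : Type*) [CommRing R] (f g : R)
    (hg : ∀ x : R, g * x ∈ Ideal.span {f} → x ∈ Ideal.span {f})
    (lam : R) (hlam : IsUnit lam) (a b : ℕ) (ha : 0 < a) (hb : 0 < b) :
    moduleLength R (R ⧸ Ideal.span {f, f ^ b - lam * g ^ a}) =
      (a : ℕ∞) * moduleLength R (R ⧸ Ideal.span {f, g}) := by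
  obtain ⟨u, rfl⟩ := hlam
  have hspan : Ideal.span {f, f ^ b - (u : R) * g ^ a} = Ideal.span {f, g ^ a} := by
    refine le_antisymm ?_ ?_
    · refine Ideal.span_le.2 ?_
      rintro x (rfl | rfl)
      · exact Ideal.subset_span (by simp)
      · refine sub_mem (Ideal.pow_mem_of_mem _ (Ideal.subset_span (by simp)) b hb) ?_
        exact Ideal.mul_mem_left _ _ (Ideal.subset_span (by simp))
    · refine Ideal.span_le.2 ?_
      rintro x (rfl | rfl)
      · exact Ideal.subset_span (by simp)
      · have hfb : f ^ b ∈ Ideal.span {f, f ^ b - (u : R) * g ^ a} :=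
          Ideal.pow_mem_of_mem _ (Ideal.subset_span (by simp)) b hb
        have hug : (u : R) * g ^ a ∈ Ideal.span {f, f ^ b - (u : R) * g ^ a} := by
          have := sub_mem hfb (Ideal.subset_span
            (show f ^ b - (u : R) * g ^ a ∈ ({f, f ^ b - (u : R) * g ^ a} : Set R) by simp))
          simpa using this
        have := Ideal.mul_mem_left _ ((u⁻¹ : Rˣ) : R) hug
        rwa [← mul_assoc, Units.inv_mul, one_mul] at this
  rw [hspan]
  exact length_pow f g hg a ha
end

section
/- Let T be a connected topological space, let r ∈ ℕ, let Z ⊆ ℂ be a finite set, and let P : T → Polynomial ℂ be a family of polynomials such that: (i) for each n ∈ ℕ, the map t ↦ (P t).coeff n is continuous; (ii) for every t ∈ T, (P t).degree = r; (iii) for every t ∈ T, every root of P t lies in Z. Then the root multiset is constant: for all t, t' ∈ T, (P t).roots = (P t').roots as multisets; consequently, for all t, t' ∈ T there exists c ∈ ℂ, c ≠ 0, with P t' = c • P t. (The engine of the paper's Proposition 10.2: a holomorphic family of univariate polynomials of constant degree with constant root set has constant root multiplicities, hence is constant up to multiplication by nonzero constants.) -/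
/-!
The map `t ↦ (P t).roots` takes only finitely many values, since every root multiset has
cardinality `r` and support in the finite set `Z`. Each of its fibres is closed: over an
algebraically closed field, `(P t).roots = M` says exactly that `P t` equals its leading
coefficient `(P t).coeff r` times `∏_{z ∈ M} (X - z)`, a family of equations between
continuous functions of `t`. A function with finite range and closed fibres also has open
fibres, so it is locally constant, hence constant on the connected space `T`. Polynomials
with the same roots over an algebraically closed field are associated.
-/

open Polynomial

theorem IsLocallyConstant.of_finite_range_of_isClosed_fiber {X Y : Type*} [TopologicalSpace X]
    {f : X → Y} (hf : (Set.range f).Finite) (hfib : ∀ y, IsClosed (f ⁻¹' {y})) :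
    IsLocallyConstant f := by
  refine IsLocallyConstant.iff_isOpen_fiber.2 fun y => ?_
  have hcompl : (f ⁻¹' {y})ᶜ = ⋃ z ∈ {y}ᶜ ∩ Set.range f, f ⁻¹' {z} := by
    rw [Set.biUnion_preimage_singleton, Set.preimage_inter_range, Set.preimage_compl]
  rw [← isClosed_compl_iff, hcompl]
  exact (hf.subset Set.inter_subset_right).isClosed_biUnion fun z _ => hfib z

theorem Multiset.finite_setOf_card_eq_of_subset {α : Type*} {Z : Set α} (hZ : Z.Finite)
    (r : ℕ) : {M : Multiset α | M.card = r ∧ ∀ x ∈ M, x ∈ Z}.Finite := by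
  refine (r • hZ.toFinset.val).powerset.finite_toSet.subset ?_
  rintro M ⟨rfl, hMZ⟩
  exact Multiset.mem_powerset.2 <|
    Multiset.le_card_smul_iff_subset.2 fun x hx => hZ.mem_toFinset.2 (hMZ x hx)

namespace Polynomial

theorem roots_eq_iff_eq_C_leadingCoeff_mul_prod {K : Type*} [Field K] [IsAlgClosed K]
    {p : K[X]} (hp : p ≠ 0) (M : Multiset K) :
    p.roots = M ↔ p = C p.leadingCoeff * (M.map fun a => X - C a).prod := by
  constructor
  · rintro rfl
    exact (C_leadingCoeff_mul_prod_multiset_X_sub_C IsAlgClosed.card_roots_eq_natDegree).symm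
  · intro h
    rw [h, roots_C_mul _ (leadingCoeff_ne_zero.2 hp), roots_multiset_prod_X_sub_C]

theorem exists_ne_zero_smul_eq_of_roots_eq {K : Type*} [Field K] [IsAlgClosed K]
    {p q : K[X]} (hp : p ≠ 0) (hq : q ≠ 0) (h : p.roots = q.roots) :
    ∃ c : K, c ≠ 0 ∧ q = c • p := by
  obtain ⟨u, hu⟩ := (IsAlgClosed.associated_iff_roots_eq_roots hp hq).2 h
  obtain ⟨c, hc, hcu⟩ := Polynomial.isUnit_iff.1 u.isUnit
  exact ⟨c, hc.ne_zero, by rw [← hu, ← hcu, smul_eq_C_mul, mul_comm]⟩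

section Family

variable {T : Type*} [TopologicalSpace T]

theorem isClosed_setOf_eq_of_continuous_coeff {R : Type*} [Semiring R] [TopologicalSpace R]
    [T2Space R] {P Q : T → R[X]} (hP : ∀ n, Continuous fun t => (P t).coeff n)
    (hQ : ∀ n, Continuous fun t => (Q t).coeff n) : IsClosed {t | P t = Q t} := by
  simp only [Polynomial.ext_iff, Set.ofPred_forall]
  exact isClosed_iInter fun n => isClosed_eq (hP n) (hQ n)

theorem isClosed_setOf_roots_eq {K : Type*} [Field K] [IsAlgClosed K] [TopologicalSpace K]
    [IsTopologicalRing K] [T2Space K] {P : T → K[X]} {r : ℕ}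
    (hcont : ∀ n, Continuous fun t => (P t).coeff n) (hdeg : ∀ t, (P t).degree = r)
    (M : Multiset K) : IsClosed {t | (P t).roots = M} := by
  have hlc : ∀ t, (P t).leadingCoeff = (P t).coeff r := fun t => by
    rw [leadingCoeff, natDegree_eq_of_degree_eq_some (hdeg t)]
  have hfib : {t | (P t).roots = M} =
      {t | P t = C ((P t).coeff r) * (M.map fun a => X - C a).prod} := by
    ext t
    rw [Set.mem_ofPred_eq, Set.mem_ofPred_eq, ← hlc,
      roots_eq_iff_eq_C_leadingCoeff_mul_prod (ne_zero_of_coe_le_degree (hdeg t).ge)]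
  rw [hfib]
  refine isClosed_setOf_eq_of_continuous_coeff hcont fun n => ?_
  simp only [coeff_C_mul]
  exact (hcont r).mul continuous_const

end Family

end Polynomial

/-- a continuous family, over a connected space `T`, of complex polynomials
of constant degree `r` all of whose roots lie in a fixed finite set `Z` has constant
multiset of roots; consequently any two members of the family agree up to multiplication
by a nonzero constant. -/
theorem roots_constant_of_connected_family {T : Type*} [TopologicalSpace T]
    [ConnectedSpace T] (r : ℕ) (Z : Set ℂ) (hZ : Z.Finite) (P : T → Polynomial ℂ)
    (hcont : ∀ n : ℕ, Continuous fun t => (P t).coeff n)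
    (hdeg : ∀ t : T, (P t).degree = r)
    (hroots : ∀ t : T, ∀ z ∈ (P t).roots, z ∈ Z) :
    ∀ t t' : T, (P t).roots = (P t').roots ∧ ∃ c : ℂ, c ≠ 0 ∧ P t' = c • P t := by
  have hne : ∀ t, P t ≠ 0 := fun t => ne_zero_of_coe_le_degree (hdeg t).ge
  have hrange : (Set.range fun t => (P t).roots).Finite :=
    (Multiset.finite_setOf_card_eq_of_subset hZ r).subset <| Set.range_subset_iff.2 fun t =>
      ⟨IsAlgClosed.card_roots_eq_natDegree.trans (natDegree_eq_of_degree_eq_some (hdeg t)),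
        hroots t⟩
  have hconst : IsLocallyConstant fun t => (P t).roots :=
    .of_finite_range_of_isClosed_fiber hrange fun M => isClosed_setOf_roots_eq hcont hdeg M
  intro t t'
  have hroots_eq := hconst.apply_eq_of_preconnectedSpace t t'
  exact ⟨hroots_eq, exists_ne_zero_smul_eq_of_roots_eq (hne t) (hne t') hroots_eq⟩
end
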